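/- For all a, b ∈ 𝔤^♮: κ_𝔤(a,b) = tr_{𝔤₀}(ad(a)∘ad(b)) + 2·tr_{𝔤₁/₂}(ad(a)∘ad(b)). Consequently, for every symmetric bilinear form κ on 𝔤, the form κ^♮ := κ + (1/2)·(κ_𝔤 − κ_{𝔤₀} − κ_{𝔤₁/₂}) restricted to 𝔤^♮ × 𝔤^♮ coincides with the restriction of κ + (1/2)·κ_{𝔤₁/₂}, where κ_{𝔤₀}(a,b) = tr_{𝔤₀}(ad(a)∘ad(b)) and κ_{𝔤₁/₂}(a,b) = tr_{𝔤₁/₂}(ad(a)∘ad(b)) are the trace forms of the 𝔤^♮-modules 𝔤₀ and 𝔤₁/₂. -/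
import Mathlib


open Module LinearMap

/-- The eigenspace of `ad x` with eigenvalue `μ`; for the minimal grading given by an
sl₂-triple `(e,h,f)`, the graded piece `𝔤_j` is `adEigC h (2j)`. -/
def adEigC {g : Type*} [LieRing g] [LieAlgebra ℂ g] (x : g) (μ : ℂ) : Submodule ℂ g :=
  Module.End.eigenspace (LieAlgebra.ad ℂ g x) μ

/-- The trace of an endomorphism `f` restricted to an `f`-invariant subspace `W`. -/
noncomputable def traceOn {g : Type*} [AddCommGroup g] [Module ℂ g]
    (W : Submodule ℂ g) (f : g →ₗ[ℂ] g) (hf : ∀ x ∈ W, f x ∈ W) : ℂ :=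
  LinearMap.trace ℂ W (f.restrict hf)

section Helpers

variable {g : Type*} [AddCommGroup g] [Module ℂ g] [FiniteDimensional ℂ g]

lemma traceOn_congr (W : Submodule ℂ g) (f f' : g →ₗ[ℂ] g) (hf : ∀ x ∈ W, f x ∈ W)
    (hf' : ∀ x ∈ W, f' x ∈ W) (hcong : ∀ x ∈ W, f x = f' x) :
    traceOn W f hf = traceOn W f' hf' := by
  unfold traceOn
  congr 1
  ext x
  simpa [LinearMap.restrict_apply] using hcong x x.2

lemma traceOn_eq_zero (W : Submodule ℂ g) (f : g →ₗ[ℂ] g) (hf : ∀ x ∈ W, f x ∈ W)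
    (hz : ∀ x ∈ W, f x = 0) : traceOn W f hf = 0 := by
  have hr : f.restrict hf = 0 := by
    ext x
    simp [LinearMap.restrict_apply, hz x x.2]
  unfold traceOn
  rw [hr]
  exact map_zero _

lemma traceOn_add_smul (W : Submodule ℂ g) (f f₁ f₂ : g →ₗ[ℂ] g) (c : ℂ)
    (hf : ∀ x ∈ W, f x ∈ W) (hf₁ : ∀ x ∈ W, f₁ x ∈ W) (hf₂ : ∀ x ∈ W, f₂ x ∈ W)
    (hcong : ∀ x ∈ W, f x = f₁ x + c • f₂ x) :
    traceOn W f hf = traceOn W f₁ hf₁ + c * traceOn W f₂ hf₂ := by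
  have hr : f.restrict hf = f₁.restrict hf₁ + c • f₂.restrict hf₂ := by
    ext x
    simpa [LinearMap.restrict_apply] using hcong x x.2
  unfold traceOn
  rw [hr, map_add, map_smul, smul_eq_mul]

lemma traceOn_comp_comm (W W' : Submodule ℂ g) (P Q : g →ₗ[ℂ] g)
    (hQ : ∀ x ∈ W, Q x ∈ W') (hP : ∀ x ∈ W', P x ∈ W)
    (h1 : ∀ x ∈ W, (P ∘ₗ Q) x ∈ W) (h2 : ∀ x ∈ W', (Q ∘ₗ P) x ∈ W') :
    traceOn W (P ∘ₗ Q) h1 = traceOn W' (Q ∘ₗ P) h2 := by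
  have e1 : (P ∘ₗ Q).restrict h1 = (P.restrict hP) ∘ₗ (Q.restrict hQ) := by
    ext x; rfl
  have e2 : (Q ∘ₗ P).restrict h2 = (Q.restrict hQ) ∘ₗ (P.restrict hP) := by
    ext x; rfl
  unfold traceOn
  rw [e1, e2]
  exact LinearMap.trace_comp_comm' (Q.restrict hQ) (P.restrict hP)

end Helpers

section LieHelpers

variable {g : Type*} [LieRing g] [LieAlgebra ℂ g]

lemma adEig_shift (h y : g) (c : ℂ) (hy : ⁅h, y⁆ = c • y) (μ : ℂ) (x : g)
    (hx : x ∈ adEigC h μ) : ⁅y, x⁆ ∈ adEigC h (μ + c) := by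
  rw [adEigC, Module.End.mem_eigenspace_iff] at hx ⊢
  rw [LieAlgebra.ad_apply] at hx ⊢
  rw [leibniz_lie, hy, hx, smul_lie, lie_smul]
  module

lemma lie_comm_of_lie_eq_zero {u v : g} (huv : ⁅u, v⁆ = 0) (x : g) :
    ⁅u, ⁅v, x⁆⁆ = ⁅v, ⁅u, x⁆⁆ := by
  rw [leibniz_lie, huv, zero_lie, zero_add]

end LieHelpers

set_option maxHeartbeats 2000000 in
/-- for `a, b ∈ 𝔤^♮`, `κ_𝔤(a,b) = tr_{𝔤₀}(ad a ∘ ad b) + 2·tr_{𝔤₁/₂}(ad a ∘ ad b)`;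
consequently for every symmetric bilinear form `κ` on `𝔤`, the form
`κ^♮ = κ + (1/2)·(κ_𝔤 − κ_{𝔤₀} − κ_{𝔤₁/₂})` restricted to `𝔤^♮` coincides with the
restriction of `κ + (1/2)·κ_{𝔤₁/₂}`. -/
theorem killingForm_eq_traces_on_centralizer
    (g : Type*) [LieRing g] [LieAlgebra ℂ g] [FiniteDimensional ℂ g]
    [LieAlgebra.IsSemisimple ℂ g]
    (e h f : g)
    (hhe : ⁅h, e⁆ = (2 : ℂ) • e) (hhf : ⁅h, f⁆ = (-2 : ℂ) • f) (hef : ⁅e, f⁆ = h)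
    (hdiag : adEigC h (-2) ⊔ adEigC h (-1) ⊔ adEigC h 0 ⊔ adEigC h 1 ⊔ adEigC h 2 = ⊤)
    (hmin : adEigC h 2 = Submodule.span ℂ {e})
    (hstab : ∀ a : g, ⁅h, a⁆ = 0 → ∀ μ : ℂ, ∀ x ∈ adEigC h μ, ⁅a, x⁆ ∈ adEigC h μ)
    (a b : g)
    (hae : ⁅e, a⁆ = 0) (hah : ⁅h, a⁆ = 0) (haf : ⁅f, a⁆ = 0)
    (hbe : ⁅e, b⁆ = 0) (hbh : ⁅h, b⁆ = 0) (hbf : ⁅f, b⁆ = 0) :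
    killingForm ℂ g a b
      = traceOn (adEigC h 0) ((LieAlgebra.ad ℂ g a) ∘ₗ (LieAlgebra.ad ℂ g b))
          (fun x hx => hstab a hah 0 _ (hstab b hbh 0 x hx))
        + 2 * traceOn (adEigC h 1) ((LieAlgebra.ad ℂ g a) ∘ₗ (LieAlgebra.ad ℂ g b))
            (fun x hx => hstab a hah 1 _ (hstab b hbh 1 x hx))
    ∧ ∀ (κ : LinearMap.BilinForm ℂ g), (∀ x y : g, κ x y = κ y x) →
        κ a b + (1 / 2) * (killingForm ℂ g a b
            - traceOn (adEigC h 0) ((LieAlgebra.ad ℂ g a) ∘ₗ (LieAlgebra.ad ℂ g b))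
                (fun x hx => hstab a hah 0 _ (hstab b hbh 0 x hx))
            - traceOn (adEigC h 1) ((LieAlgebra.ad ℂ g a) ∘ₗ (LieAlgebra.ad ℂ g b))
                (fun x hx => hstab a hah 1 _ (hstab b hbh 1 x hx)))
          = κ a b + (1 / 2) * traceOn (adEigC h 1)
              ((LieAlgebra.ad ℂ g a) ∘ₗ (LieAlgebra.ad ℂ g b))
              (fun x hx => hstab a hah 1 _ (hstab b hbh 1 x hx)) := by
  set W : ℂ → Submodule ℂ g := adEigC h with hW
  set T : g →ₗ[ℂ] g := (LieAlgebra.ad ℂ g a) ∘ₗ (LieAlgebra.ad ℂ g b) with hTdef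
  set E : g →ₗ[ℂ] g := LieAlgebra.ad ℂ g e with hEdef
  set F : g →ₗ[ℂ] g := LieAlgebra.ad ℂ g f with hFdef
  -- pointwise descriptions
  have hTx : ∀ x : g, T x = ⁅a, ⁅b, x⁆⁆ := fun x => rfl
  have hEx : ∀ x : g, E x = ⁅e, x⁆ := fun x => rfl
  have hFx : ∀ x : g, F x = ⁅f, x⁆ := fun x => rfl
  have hba : ⁅b, e⁆ = 0 := by rw [← lie_skew, hbe, neg_zero]
  -- membership facts
  have hT : ∀ μ : ℂ, ∀ x ∈ W μ, T x ∈ W μ :=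
    fun μ x hx => hstab a hah μ _ (hstab b hbh μ x hx)
  have hEm : ∀ μ : ℂ, ∀ x ∈ W μ, E x ∈ W (μ + 2) :=
    fun μ x hx => adEig_shift h e 2 hhe μ x hx
  have hFm : ∀ μ : ℂ, ∀ x ∈ W μ, F x ∈ W (μ + -2) :=
    fun μ x hx => adEig_shift h f (-2) hhf μ x hx
  have hEm' : ∀ μ : ℂ, ∀ x ∈ W (μ + -2), E x ∈ W μ := by
    intro μ x hx
    have := hEm (μ + -2) x hx
    rwa [show μ + -2 + 2 = μ by ring] at this
  have hS : ∀ μ : ℂ, ∀ x ∈ W μ, (T ∘ₗ (E ∘ₗ F)) x ∈ W μ :=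
    fun μ x hx => hT μ _ (hEm' μ _ (hFm μ x hx))
  have hFm' : ∀ μ : ℂ, ∀ x ∈ W (μ + 2), F x ∈ W μ := by
    intro μ x hx
    have := hFm (μ + 2) x hx
    rwa [show μ + 2 + -2 = μ by ring] at this
  have hS' : ∀ μ : ℂ, ∀ x ∈ W μ, (T ∘ₗ (F ∘ₗ E)) x ∈ W μ := by
    intro μ x hx
    have h1 := hEm μ x hx
    have h2 := hFm (μ + 2) _ h1
    rw [show μ + 2 + -2 = μ by ring] at h2
    exact hT μ _ h2
  -- traces
  set t : ℂ → ℂ := fun μ => traceOn (W μ) T (hT μ) with ht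
  set s : ℂ → ℂ := fun μ => traceOn (W μ) (T ∘ₗ (E ∘ₗ F)) (hS μ) with hs
  set s' : ℂ → ℂ := fun μ => traceOn (W μ) (T ∘ₗ (F ∘ₗ E)) (hS' μ) with hs'
  -- zero eigenspaces
  have hzero : ∀ μ : ℂ, μ ≠ -2 → μ ≠ -1 → μ ≠ 0 → μ ≠ 1 → μ ≠ 2 → W μ = ⊥ := by
    intro μ h1 h2 h3 h4 h5
    have indep := Module.End.eigenspaces_iSupIndep (LieAlgebra.ad ℂ g h)
    have hdisj := indep μ
    have hle : (⊤ : Submodule ℂ g)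
        ≤ ⨆ (j) (_ : j ≠ μ), Module.End.eigenspace (LieAlgebra.ad ℂ g h) j := by
      rw [← hdiag]
      refine sup_le (sup_le (sup_le (sup_le ?_ ?_) ?_) ?_) ?_
      · exact le_iSup₂_of_le (-2) (Ne.symm h1) le_rfl
      · exact le_iSup₂_of_le (-1) (Ne.symm h2) le_rfl
      · exact le_iSup₂_of_le 0 (Ne.symm h3) le_rfl
      · exact le_iSup₂_of_le 1 (Ne.symm h4) le_rfl
      · exact le_iSup₂_of_le 2 (Ne.symm h5) le_rfl
    exact hdisj.eq_bot_of_le (le_trans le_top hle)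
  -- key relation : s μ = s' μ + μ * t μ
  have key : ∀ μ : ℂ, s μ = s' μ + μ * t μ := by
    intro μ
    refine traceOn_add_smul (W μ) _ _ _ μ (hS μ) (hS' μ) (hT μ) ?_
    intro x hx
    have hhx : ⁅h, x⁆ = μ • x := by
      have := hx
      rw [hW, adEigC, Module.End.mem_eigenspace_iff, LieAlgebra.ad_apply] at this
      exact this
    simp only [LinearMap.comp_apply, hTx, hEx, hFx]
    rw [leibniz_lie e f x, hef, hhx]
    simp only [lie_add, lie_smul]
    exact add_comm _ _
  -- commutation of F with T
  have hFT : ∀ x : g, F (T x) = T (F x) := by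
    intro x
    simp only [hTx, hFx]
    rw [lie_comm_of_lie_eq_zero haf, lie_comm_of_lie_eq_zero hbf]
  -- cross relation : s μ = s' (μ + -2)
  have cross : ∀ μ : ℂ, s μ = s' (μ + -2) := by
    intro μ
    have step1 : s μ = traceOn (W μ) ((T ∘ₗ E) ∘ₗ F)
        (fun x hx => hT μ _ (hEm' μ _ (hFm μ x hx))) :=
      traceOn_congr _ _ _ _ _ (fun x _ => rfl)
    have step2 : traceOn (W μ) ((T ∘ₗ E) ∘ₗ F)
          (fun x hx => hT μ _ (hEm' μ _ (hFm μ x hx)))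
        = traceOn (W (μ + -2)) (F ∘ₗ (T ∘ₗ E))
          (fun x hx => hFm μ _ (hT μ _ (hEm' μ x hx))) := by
      refine traceOn_comp_comm (W μ) (W (μ + -2)) (T ∘ₗ E) F (hFm μ)
        (fun x hx => hT μ _ (hEm' μ x hx)) _ _
    have step3 : traceOn (W (μ + -2)) (F ∘ₗ (T ∘ₗ E))
          (fun x hx => hFm μ _ (hT μ _ (hEm' μ x hx)))
        = s' (μ + -2) := by
      refine traceOn_congr _ _ _ _ _ ?_
      intro x _
      simp only [LinearMap.comp_apply]
      exact hFT (E x)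
    rw [step1, step2, step3]
  -- vanishing of s' on W 1 and W 2 (E pushes into zero eigenspaces)
  have hs'_hi : ∀ μ : ℂ, W (μ + 2) = ⊥ → s' μ = 0 := by
    intro μ hbot
    refine traceOn_eq_zero _ _ _ ?_
    intro x hx
    have hEx0 : E x = 0 := by
      have := hEm μ x hx
      rw [hbot] at this
      simpa using this
    simp [LinearMap.comp_apply, hEx0]
  -- vanishing of s on W (-2), W (-1) (F pushes into zero eigenspaces)
  have hs_lo : ∀ μ : ℂ, W (μ + -2) = ⊥ → s μ = 0 := by
    intro μ hbot
    refine traceOn_eq_zero _ _ _ ?_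
    intro x hx
    have hFx0 : F x = 0 := by
      have := hFm μ x hx
      rw [hbot] at this
      simpa using this
    simp [LinearMap.comp_apply, hFx0]
  have w3 : W ((1:ℂ) + 2) = ⊥ := by
    rw [show (1:ℂ)+2 = 3 by norm_num]
    exact hzero 3 (by norm_num) (by norm_num) (by norm_num) (by norm_num) (by norm_num)
  have w4 : W ((2:ℂ) + 2) = ⊥ := by
    rw [show (2:ℂ)+2 = 4 by norm_num]
    exact hzero 4 (by norm_num) (by norm_num) (by norm_num) (by norm_num) (by norm_num)
  have wm3 : W ((-1:ℂ) + -2) = ⊥ := by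
    rw [show (-1:ℂ)+-2 = -3 by norm_num]
    exact hzero (-3) (by norm_num) (by norm_num) (by norm_num) (by norm_num) (by norm_num)
  have wm4 : W ((-2:ℂ) + -2) = ⊥ := by
    rw [show (-2:ℂ)+-2 = -4 by norm_num]
    exact hzero (-4) (by norm_num) (by norm_num) (by norm_num) (by norm_num) (by norm_num)
  -- t 2 = 0
  have ht2 : t 2 = 0 := by
    refine traceOn_eq_zero _ _ _ ?_
    intro x hx
    rw [hmin] at hx
    obtain ⟨c, rfl⟩ := Submodule.mem_span_singleton.mp hx
    rw [hTx, lie_smul, hba, smul_zero, lie_zero]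
  -- derived values
  have hs1 : s 1 = t 1 := by
    rw [key 1, hs'_hi 1 w3]; ring
  have hs2 : s 2 = 0 := by
    rw [key 2, hs'_hi 2 w4, ht2]; ring
  have hsm1 : s (-1) = 0 := hs_lo (-1) wm3
  have hsm2 : s (-2) = 0 := hs_lo (-2) wm4
  have hs'0 : s' ((2:ℂ) + -2) = 0 := by rw [← cross 2]; exact hs2
  have hs0 : s 0 = 0 := by
    have h20 : ((2:ℂ) + -2) = 0 := by norm_num
    rw [h20] at hs'0
    rw [key 0, hs'0]; ring
  have hs'm2 : s' ((0:ℂ) + -2) = 0 := by rw [← cross 0]; exact hs0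
  have htm2 : t (-2) = 0 := by
    have hkm2 := key (-2)
    rw [hsm2] at hkm2
    have h0m2 : ((0:ℂ) + -2) = -2 := by norm_num
    rw [h0m2] at hs'm2
    rw [hs'm2] at hkm2
    have : (0:ℂ) = -2 * t (-2) := by linear_combination hkm2
    linear_combination this/2
  have hs'm1 : s' ((1:ℂ) + -2) = t 1 := by rw [← cross 1]; exact hs1
  have htm1 : t (-1) = t 1 := by
    have hkm1 := key (-1)
    rw [hsm1] at hkm1
    have h1m2 : ((1:ℂ) + -2) = -1 := by norm_num
    rw [h1m2] at hs'm1
    rw [hs'm1] at hkm1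
    linear_combination hkm1
  -- total trace decomposition
  have hkill : killingForm ℂ g a b = t (-2) + t (-1) + t 0 + t 1 + t 2 := by
    classical
    set μs : Fin 5 → ℂ := ![-2, -1, 0, 1, 2] with hμs
    set N : Fin 5 → Submodule ℂ g := fun i => W (μs i) with hN
    have hinj : Function.Injective μs := by
      intro i j hij
      fin_cases i <;> fin_cases j <;> first | rfl | (exfalso; norm_num [hμs] at hij)
    have indepN : iSupIndep N :=
      (Module.End.eigenspaces_iSupIndep (LieAlgebra.ad ℂ g h)).comp hinj
    have hsupN : ⨆ i, N i = ⊤ := by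
      rw [eq_top_iff, ← hdiag]
      refine sup_le (sup_le (sup_le (sup_le ?_ ?_) ?_) ?_) ?_
      · exact le_iSup N 0
      · exact le_iSup N 1
      · exact le_iSup N 2
      · exact le_iSup N 3
      · exact le_iSup N 4
    have internal : DirectSum.IsInternal N :=
      DirectSum.isInternal_submodule_of_iSupIndep_of_iSup_eq_top indepN hsupN
    have htr := LinearMap.trace_eq_sum_trace_restrict internal
      (f := T) (fun i => hT (μs i))
    rw [Fin.sum_univ_five] at htr
    rw [killingForm_apply_apply, ← hTdef, htr]
    rfl
  have hmain : killingForm ℂ g a b = t 0 + 2 * t 1 := by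
    rw [hkill, htm2, htm1, ht2]; ring
  refine ⟨hmain, ?_⟩
  intro κ hsym
  rw [hmain]
  show κ a b + (1 / 2) * (t 0 + 2 * t 1 - t 0 - t 1) = κ a b + (1 / 2) * t 1
  ring
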